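/- The Preiss norm, i.e. the Minkowski functional of W = {x ∈ c₀ : Σ_{n=1}^∞ x_n^{2n} ≤ 1}, is real analytic at every nonzero point of c₀ (real analytic on c₀ \ {0}). -/

import Mathlib

open scoped ZeroAtInfty
open Filter Topology

noncomputable section

/-- `C(x) = ∑_{n≥1} x_n^{2n}` on `c₀` (indexed here by `n : ℕ` via `n ↦ n+1`),
where `c₀` is realized as the Banach space `C₀(ℕ, ℝ)` of real sequences vanishing
at infinity, with the sup norm. -/
def Cfun (x : C₀(ℕ, ℝ)) : ℝ := ∑' n : ℕ, (x n) ^ (2 * (n + 1))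

/-- The Preiss norm: the Minkowski functional of `W = {x ∈ c₀ : C(x) ≤ 1}`,
i.e. `inf {t > 0 : C(t⁻¹ x) ≤ 1}`. -/
def preissNorm (x : C₀(ℕ, ℝ)) : ℝ := sInf {t : ℝ | 0 < t ∧ Cfun (t⁻¹ • x) ≤ 1}

namespace PreissAux

lemma apply_le_norm (x : C₀(ℕ, ℝ)) (n : ℕ) : |x n| ≤ ‖x‖ := by
  rw [← ZeroAtInftyContinuousMap.norm_toBCF_eq_norm]
  exact x.toBCF.norm_coe_le_norm n

lemma norm_le_of_forall {x : C₀(ℕ, ℝ)} {c : ℝ} (hc : 0 ≤ c) (h : ∀ n, |x n| ≤ c) : ‖x‖ ≤ c := by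
  rw [← ZeroAtInftyContinuousMap.norm_toBCF_eq_norm]
  exact (BoundedContinuousFunction.norm_le hc).2 h

def ev (n : ℕ) : C₀(ℕ, ℝ) →L[ℝ] ℝ :=
  LinearMap.mkContinuous
    { toFun := fun x => x n, map_add' := fun _ _ => rfl, map_smul' := fun _ _ => rfl } 1
    (fun x => by simpa using apply_le_norm x n)

@[simp] lemma ev_apply (n : ℕ) (x : C₀(ℕ, ℝ)) : ev n x = x n := rfl

lemma ev_norm_le (n : ℕ) : ‖ev n‖ ≤ 1 := by
  refine ContinuousLinearMap.opNorm_le_bound _ zero_le_one fun x => ?_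
  simpa using (apply_le_norm x n)

lemma summand_nonneg (x : C₀(ℕ, ℝ)) (n : ℕ) : 0 ≤ (x n) ^ (2 * (n + 1)) :=
  Even.pow_nonneg ⟨n + 1, by ring⟩ _

lemma eventually_small (x : C₀(ℕ, ℝ)) {ε : ℝ} (hε : 0 < ε) : ∀ᶠ n in atTop, |x n| ≤ ε := by
  have h : Tendsto (fun n => x n) (cocompact ℕ) (𝓝 0) := x.zero_at_infty'
  rw [cocompact_eq_cofinite, Nat.cofinite_eq_atTop] at h
  have := h.eventually (Metric.closedBall_mem_nhds (0:ℝ) hε)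
  simpa [Real.dist_eq] using this

lemma cfun_summable (x : C₀(ℕ, ℝ)) : Summable fun n => (x n) ^ (2 * (n + 1)) := by
  have hg : Summable fun n : ℕ => ((1:ℝ)/4) ^ (n + 1) := by
    have := (summable_geometric_of_lt_one (by norm_num) (by norm_num : (1:ℝ)/4 < 1))
    exact this.comp_injective (add_left_injective 1)
  refine Summable.of_norm_bounded_eventually_nat hg ?_
  filter_upwards [eventually_small x (by norm_num : (0:ℝ) < 1/2)] with n hn
  have : |x n| ^ (2 * (n + 1)) ≤ ((1:ℝ)/2) ^ (2 * (n + 1)) :=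
    pow_le_pow_left₀ (abs_nonneg _) hn _
  calc ‖(x n) ^ (2 * (n + 1))‖ = |x n| ^ (2 * (n + 1)) := by
        rw [Real.norm_eq_abs, abs_pow]
      _ ≤ ((1:ℝ)/2) ^ (2 * (n + 1)) := this
      _ = ((1:ℝ)/4) ^ (n + 1) := by rw [pow_mul]; norm_num

lemma cfun_nonneg (x : C₀(ℕ, ℝ)) : 0 ≤ Cfun x :=
  tsum_nonneg (summand_nonneg x)

lemma single_le_cfun (x : C₀(ℕ, ℝ)) (m : ℕ) : (x m) ^ (2 * (m + 1)) ≤ Cfun x :=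
  Summable.le_tsum (cfun_summable x) m fun n _ => summand_nonneg x n

lemma cfun_le_of_norm_le_half {x : C₀(ℕ, ℝ)} (h : ‖x‖ ≤ 1/2) : Cfun x ≤ 1/2 := by
  have hg : Summable fun n : ℕ => ((1:ℝ)/4) ^ (n + 1) :=
    (summable_geometric_of_lt_one (by norm_num) (by norm_num : (1:ℝ)/4 < 1)).comp_injective
      (add_left_injective 1)
  have hle : ∀ n : ℕ, (x n) ^ (2 * (n + 1)) ≤ ((1:ℝ)/4) ^ (n + 1) := by
    intro n
    have h1 : |x n| ≤ 1/2 := (apply_le_norm x n).trans h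
    calc (x n) ^ (2 * (n + 1)) = |x n| ^ (2 * (n + 1)) := by
          rw [← abs_pow, abs_of_nonneg (summand_nonneg x n)]
        _ ≤ ((1:ℝ)/2) ^ (2 * (n + 1)) := pow_le_pow_left₀ (abs_nonneg _) h1 _
        _ = ((1:ℝ)/4) ^ (n + 1) := by rw [pow_mul]; norm_num
  calc Cfun x ≤ ∑' n : ℕ, ((1:ℝ)/4) ^ (n + 1) := Summable.tsum_le_tsum hle (cfun_summable x) hg
    _ ≤ 1/2 := by
        have : ∀ n : ℕ, ((1:ℝ)/4) ^ (n + 1) = ((1:ℝ)/4) ^ n * (1/4) := fun n => by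
          rw [pow_succ]
        rw [tsum_congr this, tsum_mul_right,
          tsum_geometric_of_lt_one (by norm_num) (by norm_num)]
        norm_num



/-- arity-`k` monomial `y ↦ (y n)^k` as a continuous multilinear map. -/
def T (k n : ℕ) : ContinuousMultilinearMap ℝ (fun _ : Fin k => C₀(ℕ, ℝ)) ℝ :=
  (ContinuousMultilinearMap.mkPiAlgebra ℝ (Fin k) ℝ).compContinuousLinearMap fun _ => ev n

lemma T_apply (k n : ℕ) (y : C₀(ℕ, ℝ)) : T k n (fun _ => y) = (y n) ^ k := by
  simp [T, ContinuousMultilinearMap.compContinuousLinearMap_apply,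
    ContinuousMultilinearMap.mkPiAlgebra_apply]

lemma T_norm_le (k n : ℕ) : ‖T k n‖ ≤ 1 := by
  refine (ContinuousMultilinearMap.norm_compContinuousLinearMap_le _ _).trans ?_
  have h1 : ‖ContinuousMultilinearMap.mkPiAlgebra ℝ (Fin k) ℝ‖ ≤ 1 :=
    le_of_eq ContinuousMultilinearMap.norm_mkPiAlgebra
  have h2 : (∏ _i : Fin k, ‖ev n‖) ≤ 1 :=
    Finset.prod_le_one (fun i _ => norm_nonneg (ev n)) (fun _ _ => ev_norm_le n)
  calc ‖ContinuousMultilinearMap.mkPiAlgebra ℝ (Fin k) ℝ‖ * ∏ _i : Fin k, ‖ev n‖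
      ≤ 1 * 1 := mul_le_mul h1 h2 (Finset.prod_nonneg fun _ _ => norm_nonneg (ev n)) zero_le_one
    _ = 1 := mul_one 1

/-- The power series of `Cfun` at `0`. -/
def pseries : FormalMultilinearSeries ℝ C₀(ℕ, ℝ) ℝ := fun k =>
  if 2 ∣ k ∧ k ≠ 0 then T k (k / 2 - 1) else 0

lemma pseries_apply_eq (n : ℕ) : pseries (2 * (n + 1)) = T (2 * (n + 1)) n := by
  have h : 2 ∣ 2 * (n + 1) ∧ 2 * (n + 1) ≠ 0 := ⟨⟨n + 1, rfl⟩, by omega⟩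
  have e : pseries (2 * (n + 1))
      = if 2 ∣ 2 * (n + 1) ∧ 2 * (n + 1) ≠ 0 then T (2 * (n + 1)) (2 * (n + 1) / 2 - 1) else 0 :=
    rfl
  rw [e, if_pos h]
  congr 1
  omega

lemma pseries_eq_zero {k : ℕ} (h : ¬∃ n : ℕ, k = 2 * (n + 1)) : pseries k = 0 := by
  have e : pseries k = if 2 ∣ k ∧ k ≠ 0 then T k (k / 2 - 1) else 0 := rfl
  rw [e, if_neg]
  rintro ⟨⟨m, rfl⟩, h0⟩
  exact h ⟨m - 1, by omega⟩

lemma pseries_norm_le (k : ℕ) : ‖pseries k‖ ≤ 1 := by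
  have e : pseries k = if 2 ∣ k ∧ k ≠ 0 then T k (k / 2 - 1) else 0 := rfl
  rw [e]
  split
  · exact T_norm_le _ _
  · exact le_trans (le_of_eq ContinuousMultilinearMap.opNorm_zero) zero_le_one

lemma hasFPowerSeriesOnBall_cfun : HasFPowerSeriesOnBall Cfun pseries 0 1 := by
  constructor
  · have : (1 : NNReal) ≤ pseries.radius := by
      refine FormalMultilinearSeries.le_radius_of_bound _ 1 fun k => ?_
      simpa using pseries_norm_le k
    simpa using this
  · norm_num
  · intro y _
    have hinj : Function.Injective (fun n : ℕ => 2 * (n + 1)) := by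
      intro a b h
      have h' : 2 * (a + 1) = 2 * (b + 1) := h
      omega
    have key : HasSum ((fun k => pseries k fun _ => y) ∘ fun n : ℕ => 2 * (n + 1))
        (Cfun (0 + y)) := by
      have : ∀ n : ℕ, ((fun k => pseries k fun _ => y) ∘ fun n : ℕ => 2 * (n + 1)) n
          = (y n) ^ (2 * (n + 1)) := by
        intro n
        simp only [Function.comp_apply, pseries_apply_eq, T_apply]
      rw [funext this, zero_add]
      exact (cfun_summable y).hasSum
    refine (Function.Injective.hasSum_iff hinj ?_).1 key
    intro k hk
    have : ¬∃ n : ℕ, k = 2 * (n + 1) := by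
      rintro ⟨n, rfl⟩; exact hk ⟨n, rfl⟩
    rw [pseries_eq_zero this]
    rfl

/-- Projection killing the first `N` coordinates. -/
def proj (N : ℕ) : C₀(ℕ, ℝ) →L[ℝ] C₀(ℕ, ℝ) :=
  LinearMap.mkContinuous
    { toFun := fun x =>
        { toFun := fun n => if N ≤ n then x n else 0
          continuous_toFun := continuous_of_discreteTopology
          zero_at_infty' := by
            refine x.zero_at_infty'.congr' ?_
            rw [cocompact_eq_cofinite]
            have hfin : {n : ℕ | ¬ N ≤ n}.Finite :=
              (Set.finite_Iio N).subset fun n hn => by simpa using hn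
            filter_upwards [hfin.eventually_cofinite_notMem] with n hn
            simp only [Set.mem_setOf_eq, not_not] at hn
            simp [hn] }
      map_add' := fun f g => by
        ext n
        by_cases h : N ≤ n <;> simp [h]
      map_smul' := fun c f => by
        ext n
        by_cases h : N ≤ n <;> simp [h] }
    1 fun x => by
      refine le_trans (norm_le_of_forall (norm_nonneg x) fun n => ?_) (by simp)
      dsimp
      split
      · exact apply_le_norm x n
      · simpa using norm_nonneg x

@[simp] lemma proj_apply (N : ℕ) (x : C₀(ℕ, ℝ)) (n : ℕ) :
    proj N x n = if N ≤ n then x n else 0 := rfl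

lemma cfun_proj (N : ℕ) (z : C₀(ℕ, ℝ)) :
    Cfun z = (∑ n ∈ Finset.range N, (z n) ^ (2 * (n + 1))) + Cfun (proj N z) := by
  classical
  set g : ℕ → ℝ := fun n => (z n) ^ (2 * (n + 1)) with hg
  have hgs : Summable g := cfun_summable z
  have hind : ∀ n, (proj N z n) ^ (2 * (n + 1)) = if N ≤ n then g n else 0 := by
    intro n
    by_cases h : N ≤ n <;> simp [h, hg, zero_pow]
  have hgs' : Summable fun n => ‖g n‖ := by
    simpa [Real.norm_eq_abs, hg] using summable_abs_iff.mpr hgs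
  have hsum2 : Summable fun n => if N ≤ n then g n else 0 := by
    refine Summable.of_norm_bounded_eventually_nat hgs' ?_
    filter_upwards with n
    split
    · exact le_refl _
    · simp
  have h1 : Cfun (proj N z) = ∑' n, if N ≤ n then g n else 0 := by
    rw [Cfun]; exact tsum_congr hind
  have h2 : ∑' n, (if N ≤ n then g n else 0) = ∑' n, g (n + N) := by
    rw [← Summable.sum_add_tsum_nat_add N hsum2]
    have : ∀ n ∈ Finset.range N, (if N ≤ n then g n else 0) = 0 := by
      intro n hn
      rw [if_neg]; simpa using Finset.mem_range.1 hn
    rw [Finset.sum_congr rfl this]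
    simp only [Finset.sum_const_zero, zero_add]
    refine tsum_congr fun n => ?_
    rw [if_pos (by omega)]
  have h3 := Summable.sum_add_tsum_nat_add N hgs
  rw [h1, h2, Cfun, ← h3]

lemma cfun_analyticAt (y : C₀(ℕ, ℝ)) : AnalyticAt ℝ Cfun y := by
  obtain ⟨N, hN⟩ := (eventually_small y (by norm_num : (0:ℝ) < 1/2)).exists_forall_of_atTop
  have hnorm : ‖proj N y‖ ≤ 1/2 := by
    refine norm_le_of_forall (by norm_num) fun n => ?_
    rw [proj_apply]
    split
    · exact hN n ‹_›
    · norm_num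
  have h1 : AnalyticAt ℝ (fun z => ∑ n ∈ Finset.range N, (z n) ^ (2 * (n + 1))) y := by
    refine Finset.analyticAt_fun_sum _ fun n _ => ?_
    have := ((ev n).analyticAt y).pow (2 * (n + 1))
    exact this
  have h2 : AnalyticAt ℝ (fun z => Cfun (proj N z)) y := by
    have hball : AnalyticAt ℝ Cfun (proj N y) := by
      refine hasFPowerSeriesOnBall_cfun.analyticAt_of_mem ?_
      rw [EMetric.mem_ball, edist_zero_right]
      have h12 : ‖proj N y‖₊ < 1 := by
        rw [← NNReal.coe_lt_coe]
        push_cast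
        calc (‖proj N y‖ : ℝ) ≤ 1/2 := hnorm
          _ < 1 := by norm_num
      rw [enorm_eq_nnnorm]; exact_mod_cast h12
    exact hball.comp ((proj N).analyticAt y)
  refine (h1.add h2).congr ?_
  filter_upwards with z
  show (fun z => ∑ n ∈ Finset.range N, (z n) ^ (2 * (n + 1))) z
      + (fun z => Cfun (proj N z)) z = Cfun z
  rw [← cfun_proj]


end PreissAux



namespace PreissAux

lemma smul_coord (c : ℝ) (x : C₀(ℕ, ℝ)) (n : ℕ) : (c • x) n = c * x n := rfl

lemma exists_ne {x : C₀(ℕ, ℝ)} (hx : x ≠ 0) : ∃ m, x m ≠ 0 := by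
  by_contra h
  push_neg at h
  exact hx (DFunLike.ext _ _ fun n => by simpa using h n)

lemma cfun_smul_inv_le {x : C₀(ℕ, ℝ)} {s t : ℝ} (hs : 0 < s) (hst : s ≤ t) :
    Cfun (t⁻¹ • x) ≤ Cfun (s⁻¹ • x) := by
  refine Summable.tsum_le_tsum (fun n => ?_) (cfun_summable _) (cfun_summable _)
  have hev : Even (2 * (n + 1)) := ⟨n + 1, by ring⟩
  rw [smul_coord, smul_coord, ← hev.pow_abs (t⁻¹ * x n), ← hev.pow_abs (s⁻¹ * x n)]
  refine pow_le_pow_left₀ (abs_nonneg _) ?_ _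
  rw [abs_mul, abs_mul]
  have ht : 0 < t := lt_of_lt_of_le hs hst
  have : t⁻¹ ≤ s⁻¹ := by gcongr
  have h2 : |t⁻¹| ≤ |s⁻¹| := by
    rw [abs_of_pos (inv_pos.2 ht), abs_of_pos (inv_pos.2 hs)]; exact this
  exact mul_le_mul_of_nonneg_right h2 (abs_nonneg _)

lemma cfun_smul_inv_lt {x : C₀(ℕ, ℝ)} {m : ℕ} (hm : x m ≠ 0) {s t : ℝ}
    (hs : 0 < s) (hst : s < t) : Cfun (t⁻¹ • x) < Cfun (s⁻¹ • x) := by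
  have ht : 0 < t := lt_trans hs hst
  refine Summable.tsum_lt_tsum_of_nonneg (i := m) (fun n => summand_nonneg _ n) (fun n => ?_) ?_ (cfun_summable _)
  · have hev : Even (2 * (n + 1)) := ⟨n + 1, by ring⟩
    rw [smul_coord, smul_coord, ← hev.pow_abs (t⁻¹ * x n), ← hev.pow_abs (s⁻¹ * x n)]
    refine pow_le_pow_left₀ (abs_nonneg _) ?_ _
    rw [abs_mul, abs_mul]
    have h2 : |t⁻¹| ≤ |s⁻¹| := by
      rw [abs_of_pos (inv_pos.2 ht), abs_of_pos (inv_pos.2 hs)]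
      exact inv_anti₀ hs hst.le
    exact mul_le_mul_of_nonneg_right h2 (abs_nonneg _)
  · have hev : Even (2 * (m + 1)) := ⟨m + 1, by ring⟩
    rw [smul_coord, smul_coord, ← hev.pow_abs (t⁻¹ * x m), ← hev.pow_abs (s⁻¹ * x m)]
    refine pow_lt_pow_left₀ ?_ (abs_nonneg _) (by omega)
    rw [abs_mul, abs_mul]
    have h2 : |t⁻¹| < |s⁻¹| := by
      rw [abs_of_pos (inv_pos.2 ht), abs_of_pos (inv_pos.2 hs)]
      gcongr
    exact mul_lt_mul_of_pos_right h2 (abs_pos.2 hm)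

lemma preissNorm_eq {x : C₀(ℕ, ℝ)} (hx : x ≠ 0) {t : ℝ} (ht : 0 < t)
    (h1 : Cfun (t⁻¹ • x) = 1) : preissNorm x = t := by
  obtain ⟨m, hm⟩ := exists_ne hx
  have hset : {s : ℝ | 0 < s ∧ Cfun (s⁻¹ • x) ≤ 1} = Set.Ici t := by
    ext s
    simp only [Set.mem_setOf_eq, Set.mem_Ici]
    constructor
    · rintro ⟨hs, hle⟩
      by_contra hlt
      push_neg at hlt
      have := cfun_smul_inv_lt hm hs hlt
      rw [h1] at this
      linarith
    · intro hts
      exact ⟨lt_of_lt_of_le ht hts, le_trans (cfun_smul_inv_le ht hts) h1.le⟩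
  rw [preissNorm, hset, csInf_Ici]

lemma preissNorm_spec {x : C₀(ℕ, ℝ)} (hx : x ≠ 0) :
    0 < preissNorm x ∧ Cfun ((preissNorm x)⁻¹ • x) = 1 := by
  obtain ⟨m, hm⟩ := exists_ne hx
  have hxn : 0 < ‖x‖ := norm_pos_iff.2 hx
  set s₁ : ℝ := |x m| / 2 with hs₁def
  have hs₁0 : 0 < s₁ := by
    have := abs_pos.2 hm
    positivity
  set s₀ : ℝ := 2 * ‖x‖ with hs₀def
  have hs₁₀ : s₁ ≤ s₀ := by
    have := apply_le_norm x m
    rw [hs₁def, hs₀def]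
    linarith
  have hcont : ContinuousOn (fun s : ℝ => Cfun (s⁻¹ • x)) (Set.Icc s₁ s₀) := by
    intro s hs
    have hspos : 0 < s := lt_of_lt_of_le hs₁0 hs.1
    have h1 : ContinuousAt (fun s : ℝ => s⁻¹ • x) s :=
      (continuousAt_inv₀ hspos.ne').smul continuousAt_const
    exact ((cfun_analyticAt _).continuousAt.comp h1).continuousWithinAt
  have hhi : Cfun (s₀⁻¹ • x) ≤ 1/2 := by
    apply cfun_le_of_norm_le_half
    refine norm_le_of_forall (by norm_num) fun n => ?_
    rw [smul_coord, abs_mul, abs_of_pos (inv_pos.2 (by positivity : (0:ℝ) < s₀))]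
    have h1 : |x n| ≤ ‖x‖ := apply_le_norm x n
    have h2 : s₀⁻¹ * |x n| ≤ s₀⁻¹ * ‖x‖ :=
      mul_le_mul_of_nonneg_left h1 (inv_nonneg.2 (by positivity))
    refine h2.trans ?_
    rw [hs₀def, show (2 * ‖x‖)⁻¹ * ‖x‖ = 1/2 by field_simp]
  have hlo : 1 ≤ Cfun (s₁⁻¹ • x) := by
    refine le_trans ?_ (single_le_cfun (s₁⁻¹ • x) m)
    have hev : Even (2 * (m + 1)) := ⟨m + 1, by ring⟩
    rw [smul_coord, ← hev.pow_abs (s₁⁻¹ * x m)]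
    refine one_le_pow₀ ?_
    rw [abs_mul, abs_of_pos (inv_pos.2 hs₁0), hs₁def]
    rw [show (|x m| / 2)⁻¹ * |x m| = 2 by field_simp]
    norm_num
  have hmem : (1:ℝ) ∈ Set.Icc (Cfun (s₀⁻¹ • x)) (Cfun (s₁⁻¹ • x)) := ⟨by linarith, hlo⟩
  obtain ⟨t, htIcc, htval⟩ := intermediate_value_Icc' hs₁₀ hcont hmem
  have ht0 : 0 < t := lt_of_lt_of_le hs₁0 htIcc.1
  have heq := preissNorm_eq hx ht0 htval
  rw [heq]
  exact ⟨ht0, htval⟩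



lemma fderiv_cfun_self_pos {y : C₀(ℕ, ℝ)} (hy : Cfun y = 1) :
    0 < (fderiv ℝ Cfun y) y := by
  classical
  set g : ℕ → ℝ → ℝ := fun n t => (t * y n) ^ (2 * (n + 1)) with hgdef
  set g' : ℕ → ℝ → ℝ :=
    fun n t => (2 * (n + 1) : ℕ) * (t * y n) ^ (2 * (n + 1) - 1) * (y n) with hg'def
  set u : ℕ → ℝ := fun n => (2 * (n + 1) : ℕ) * 2 ^ (2 * (n + 1) - 1) * |y n| ^ (2 * (n + 1))
    with hudef
  have hgderiv : ∀ n t, HasDerivAt (g n) (g' n t) t := fun n t =>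
    (hasDerivAt_mul_const (y n)).pow (2 * (n + 1))
  have hbound : ∀ n t, t ∈ Set.Ioo (-2 : ℝ) 2 → ‖g' n t‖ ≤ u n := by
    intro n t ht
    have h2 : |t| ≤ 2 := abs_le.2 ⟨ht.1.le, ht.2.le⟩
    have e1 : ‖g' n t‖ = (2 * (n + 1) : ℕ) * |t * y n| ^ (2 * (n + 1) - 1) * |y n| := by
      rw [hg'def, Real.norm_eq_abs, abs_mul, abs_mul, abs_pow, Nat.abs_cast]
    rw [e1, hudef]
    have habs : |t * y n| ^ (2 * (n + 1) - 1)
        ≤ 2 ^ (2 * (n + 1) - 1) * |y n| ^ (2 * (n + 1) - 1) := by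
      rw [← mul_pow]
      refine pow_le_pow_left₀ (abs_nonneg _) ?_ _
      rw [abs_mul]
      exact mul_le_mul_of_nonneg_right h2 (abs_nonneg _)
    have hfin : |y n| ^ (2 * (n + 1) - 1) * |y n| = |y n| ^ (2 * (n + 1)) := by
      rw [← pow_succ]; congr 1; all_goals omega
    calc (2 * (n + 1) : ℕ) * |t * y n| ^ (2 * (n + 1) - 1) * |y n|
        ≤ (2 * (n + 1) : ℕ) * (2 ^ (2 * (n + 1) - 1) * |y n| ^ (2 * (n + 1) - 1)) * |y n| :=
          mul_le_mul_of_nonneg_right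
            (mul_le_mul_of_nonneg_left habs (by positivity)) (abs_nonneg _)
      _ = (2 * (n + 1) : ℕ) * 2 ^ (2 * (n + 1) - 1) * (|y n| ^ (2 * (n + 1) - 1) * |y n|) := by
          ring
      _ = (2 * (n + 1) : ℕ) * 2 ^ (2 * (n + 1) - 1) * |y n| ^ (2 * (n + 1)) := by rw [hfin]
  have hN := (eventually_small y (by norm_num : (0:ℝ) < 1/4)).exists_forall_of_atTop
  obtain ⟨N, hN⟩ := hN
  have hu : Summable u := by
    have hv : Summable fun n : ℕ => (2 * ((n : ℝ) + 1)) * (1/2) ^ n := by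
      have h1 : Summable fun n : ℕ => (n : ℝ) * (1/2) ^ n := by
        simpa using summable_pow_mul_geometric_of_norm_lt_one 1
          (r := (1/2 : ℝ)) (by norm_num)
      have h2 : Summable fun n : ℕ => ((1:ℝ)/2) ^ n :=
        summable_geometric_of_lt_one (by norm_num) (by norm_num)
      have := (h1.add h2).mul_left 2
      refine this.congr fun n => ?_
      ring
    refine Summable.of_norm_bounded_eventually_nat hv ?_
    filter_upwards [Filter.eventually_ge_atTop N] with n hn
    have hy4 : |y n| ≤ 1/4 := hN n hn
    have hkey : (2:ℝ) ^ (2 * (n + 1) - 1) * |y n| ^ (2 * (n + 1)) ≤ (1/2) ^ n := by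
      have h1 : |y n| ^ (2 * (n + 1)) ≤ ((1:ℝ)/4) ^ (2 * (n + 1)) :=
        pow_le_pow_left₀ (abs_nonneg _) hy4 _
      have h2 : (2:ℝ) ^ (2 * (n + 1) - 1) * ((1:ℝ)/4) ^ (2 * (n + 1)) = (1/2) ^ (2 * n + 3) := by
        rw [show 2 * (n + 1) - 1 = 2 * n + 1 by omega]
        have e4 : ((1:ℝ)/4) ^ (2 * (n + 1)) = ((1:ℝ)/2) ^ (4 * n + 4) := by
          rw [show ((1:ℝ)/4) = (1/2) ^ 2 by norm_num, ← pow_mul]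
          congr 1
          omega
        rw [e4, show 4 * n + 4 = (2 * n + 1) + (2 * n + 3) by omega,
          pow_add ((1:ℝ)/2) (2 * n + 1) (2 * n + 3), ← mul_assoc, ← mul_pow]
        norm_num
      have h3 : ((1:ℝ)/2) ^ (2 * n + 3) ≤ (1/2) ^ n :=
        pow_le_pow_of_le_one (by norm_num) (by norm_num) (by omega)
      calc (2:ℝ) ^ (2 * (n + 1) - 1) * |y n| ^ (2 * (n + 1))
          ≤ (2:ℝ) ^ (2 * (n + 1) - 1) * ((1:ℝ)/4) ^ (2 * (n + 1)) := by
            exact mul_le_mul_of_nonneg_left h1 (by positivity)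
        _ = (1/2) ^ (2 * n + 3) := h2
        _ ≤ (1/2) ^ n := h3
    rw [hudef]
    simp only [Real.norm_eq_abs]
    rw [abs_of_nonneg (by positivity)]
    calc (2 * (n + 1) : ℕ) * 2 ^ (2 * (n + 1) - 1) * |y n| ^ (2 * (n + 1))
        = (2 * (n + 1) : ℕ) * (2 ^ (2 * (n + 1) - 1) * |y n| ^ (2 * (n + 1))) := by ring
      _ ≤ (2 * (n + 1) : ℕ) * ((1/2) ^ n) := by
          exact mul_le_mul_of_nonneg_left hkey (by positivity)
      _ = 2 * ((n : ℝ) + 1) * (1/2) ^ n := by push_cast; ring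
  have hg0 : Summable fun n => g n 1 := by
    refine (cfun_summable y).congr fun n => ?_
    rw [hgdef]; simp
  have hmain : HasDerivAt (fun t => ∑' n, g n t) (∑' n, g' n 1) 1 :=
    hasDerivAt_tsum_of_isPreconnected hu isOpen_Ioo (convex_Ioo _ _).isPreconnected
      (fun n t _ => hgderiv n t) hbound (by norm_num : (1:ℝ) ∈ Set.Ioo (-2:ℝ) 2) hg0
      (by norm_num : (1:ℝ) ∈ Set.Ioo (-2:ℝ) 2)
  have hfun : (fun t : ℝ => ∑' n, g n t) = fun t => Cfun (t • y) := by
    funext t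
    rw [Cfun]
    exact tsum_congr fun n => by rw [hgdef, smul_coord]
  rw [hfun] at hmain
  -- the other computation of the same derivative
  have hdiff : HasFDerivAt Cfun (fderiv ℝ Cfun y) ((1:ℝ) • y) := by
    rw [one_smul]
    exact (cfun_analyticAt y).differentiableAt.hasFDerivAt
  have hsm : HasDerivAt (fun t : ℝ => t • y) ((1:ℝ) • y) 1 := (hasDerivAt_id 1).smul_const y
  rw [one_smul] at hsm
  have hcomp : HasDerivAt (fun t : ℝ => Cfun (t • y)) ((fderiv ℝ Cfun y) y) 1 :=
    hdiff.comp_hasDerivAt_of_eq 1 hsm rfl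
  have huniq : (fderiv ℝ Cfun y) y = ∑' n, g' n 1 := hcomp.unique hmain
  -- now show the sum is at least 2
  have hterm : ∀ n, g' n 1 = (2 * (n + 1) : ℕ) * (y n) ^ (2 * (n + 1)) := by
    intro n
    rw [hg'def]
    simp only [one_mul]
    rw [mul_assoc, ← pow_succ]
    congr 2
    all_goals omega
  have hSsum : Summable fun n => g' n 1 :=
    Summable.of_norm_bounded_eventually_nat hu
      (Filter.Eventually.of_forall fun n => hbound n 1 (by norm_num))
  have h2a : Summable fun n => 2 * ((y n) ^ (2 * (n + 1))) := (cfun_summable y).mul_left 2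
  have hle : ∀ n, 2 * ((y n) ^ (2 * (n + 1))) ≤ g' n 1 := by
    intro n
    rw [hterm]
    refine mul_le_mul_of_nonneg_right ?_ (summand_nonneg y n)
    push_cast
    linarith [Nat.cast_nonneg (α := ℝ) n]
  have h2S : 2 ≤ ∑' n, g' n 1 := by
    have := Summable.tsum_le_tsum hle h2a hSsum
    rwa [tsum_mul_left, show ∑' n, (y n) ^ (2 * (n + 1)) = 1 from hy, mul_one] at this
  rw [huniq]
  linarith


end PreissAux


open ContinuousLinearMap

/-- The Preiss norm is real analytic at every nonzero point of `c₀`. -/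
theorem preissNorm_analytic_off_zero :
    AnalyticOnNhd ℝ preissNorm {x : C₀(ℕ, ℝ) | x ≠ 0} := by
  intro x₀ hx₀
  simp only [Set.mem_setOf_eq] at hx₀
  obtain ⟨hr0, hr1⟩ := PreissAux.preissNorm_spec hx₀
  set r : ℝ := preissNorm x₀ with hrdef
  set y₀ : C₀(ℕ, ℝ) := r⁻¹ • x₀ with hy₀def
  set ℓ : C₀(ℕ, ℝ) →L[ℝ] ℝ := fderiv ℝ Cfun y₀ with hℓdef
  have hc : 0 < ℓ y₀ := PreissAux.fderiv_cfun_self_pos hr1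
  set Φ : ℝ × C₀(ℕ, ℝ) → ℝ × C₀(ℕ, ℝ) := fun p => (Cfun (p.1⁻¹ • p.2), p.2) with hΦdef
  -- analyticity of Φ
  have hψa : AnalyticAt ℝ (fun p : ℝ × C₀(ℕ, ℝ) => p.1⁻¹ • p.2) (r, x₀) :=
    (analyticAt_fst.inv hr0.ne').smul analyticAt_snd
  have hCa : AnalyticAt ℝ Cfun y₀ := PreissAux.cfun_analyticAt y₀
  have hΦa : AnalyticAt ℝ Φ (r, x₀) := (hCa.comp_of_eq hψa rfl).prod analyticAt_snd
  -- strict derivative of Φ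
  set d : ℝ := -(r ^ 2)⁻¹ with hddef
  set A : ℝ × C₀(ℕ, ℝ) →L[ℝ] ℝ :=
    (ContinuousLinearMap.smulRight (1 : ℝ →L[ℝ] ℝ) d).comp (fst ℝ ℝ (C₀(ℕ, ℝ))) with hAdef
  have h1 : HasStrictFDerivAt (fun p : ℝ × C₀(ℕ, ℝ) => p.1⁻¹) A (r, x₀) :=
    (hasStrictDerivAt_inv hr0.ne').hasStrictFDerivAt.comp (r, x₀) hasStrictFDerivAt_fst
  set Dψ : ℝ × C₀(ℕ, ℝ) →L[ℝ] C₀(ℕ, ℝ) :=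
    r⁻¹ • snd ℝ ℝ (C₀(ℕ, ℝ)) + A.smulRight x₀ with hDψdef
  have hψ' : HasStrictFDerivAt (fun p : ℝ × C₀(ℕ, ℝ) => p.1⁻¹ • p.2) Dψ (r, x₀) :=
    h1.smul hasStrictFDerivAt_snd
  have hC' : HasStrictFDerivAt Cfun ℓ y₀ := hCa.hasStrictFDerivAt
  have hcomp : HasStrictFDerivAt (fun p : ℝ × C₀(ℕ, ℝ) => Cfun (p.1⁻¹ • p.2)) (ℓ.comp Dψ)
      (r, x₀) := hC'.comp (r, x₀) hψ'
  set D : ℝ × C₀(ℕ, ℝ) →L[ℝ] ℝ × C₀(ℕ, ℝ) :=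
    (ℓ.comp Dψ).prod (snd ℝ ℝ (C₀(ℕ, ℝ))) with hDdef
  have hΦ' : HasStrictFDerivAt Φ D (r, x₀) := hcomp.prodMk hasStrictFDerivAt_snd
  have hDapply : ∀ q : ℝ × C₀(ℕ, ℝ), D q = (r⁻¹ * ℓ q.2 + q.1 * d * ℓ x₀, q.2) := by
    intro q
    simp only [hDdef, hDψdef, hAdef, ContinuousLinearMap.prod_apply,
      ContinuousLinearMap.comp_apply, ContinuousLinearMap.add_apply,
      ContinuousLinearMap.coe_smul', Pi.smul_apply, ContinuousLinearMap.smulRight_apply,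
      ContinuousLinearMap.one_apply, ContinuousLinearMap.coe_fst', ContinuousLinearMap.coe_snd',
      smul_eq_mul, map_add, map_smul]
  -- the nonzero scalar
  have hx₀eq : x₀ = r • y₀ := by rw [hy₀def, smul_inv_smul₀ hr0.ne']
  have hℓx₀ : ℓ x₀ = r * ℓ y₀ := by rw [hx₀eq, map_smul, smul_eq_mul]
  have hd0 : d < 0 := by
    rw [hddef]
    have : (0:ℝ) < (r ^ 2)⁻¹ := inv_pos.2 (by positivity)
    linarith
  have ha : d * ℓ x₀ < 0 := mul_neg_of_neg_of_pos hd0 (by rw [hℓx₀]; exact mul_pos hr0 hc)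
  have hane : d * ℓ x₀ ≠ 0 := ha.ne
  set Dinv : ℝ × C₀(ℕ, ℝ) →L[ℝ] ℝ × C₀(ℕ, ℝ) :=
    ((d * ℓ x₀)⁻¹ • (fst ℝ ℝ (C₀(ℕ, ℝ)) - r⁻¹ • (ℓ.comp (snd ℝ ℝ (C₀(ℕ, ℝ)))))).prod
      (snd ℝ ℝ (C₀(ℕ, ℝ))) with hDinvdef
  have hDinvapply : ∀ q : ℝ × C₀(ℕ, ℝ),
      Dinv q = ((d * ℓ x₀)⁻¹ * (q.1 - r⁻¹ * ℓ q.2), q.2) := by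
    intro q
    simp only [hDinvdef, ContinuousLinearMap.prod_apply, ContinuousLinearMap.coe_smul',
      Pi.smul_apply, ContinuousLinearMap.coe_sub', Pi.sub_apply, ContinuousLinearMap.coe_fst',
      ContinuousLinearMap.comp_apply, ContinuousLinearMap.coe_snd', smul_eq_mul]
  have hleft : Function.LeftInverse Dinv D := by
    intro q
    rw [hDapply, hDinvapply]
    refine Prod.ext ?_ rfl
    simp only
    field_simp
    have hd1 := left_ne_zero_of_mul hane; have hd2 := right_ne_zero_of_mul hane; field_simp
    ring
  have hright : Function.RightInverse Dinv D := by
    intro q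
    rw [hDinvapply, hDapply]
    refine Prod.ext ?_ rfl
    simp only
    field_simp
    have hd1 := left_ne_zero_of_mul hane; have hd2 := right_ne_zero_of_mul hane; field_simp
    ring
  set e : (ℝ × C₀(ℕ, ℝ)) ≃L[ℝ] (ℝ × C₀(ℕ, ℝ)) :=
    ContinuousLinearEquiv.equivOfInverse D Dinv hleft hright with hedef
  have hecoe : (e : ℝ × C₀(ℕ, ℝ) →L[ℝ] ℝ × C₀(ℕ, ℝ)) = D := rfl
  have hΦ'' : HasStrictFDerivAt Φ (e : ℝ × C₀(ℕ, ℝ) →L[ℝ] ℝ × C₀(ℕ, ℝ)) (r, x₀) := by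
    rw [hecoe]; exact hΦ'
  set hom := hΦ''.toOpenPartialHomeomorph Φ with hhomdef
  have hmemsrc : (r, x₀) ∈ hom.source := hΦ''.mem_toOpenPartialHomeomorph_source
  have hcoe : ⇑hom = Φ := hΦ''.toOpenPartialHomeomorph_coe
  have hΦval : Φ (r, x₀) = (1, x₀) := by
    rw [hΦdef]
    exact Prod.ext hr1 rfl
  have hsymm : AnalyticAt ℝ hom.symm ((1 : ℝ), x₀) := by
    have hfd : fderiv ℝ hom (r, x₀) = (e : ℝ × C₀(ℕ, ℝ) →L[ℝ] ℝ × C₀(ℕ, ℝ)) := by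
      rw [hcoe, hecoe]
      exact hΦ'.hasFDerivAt.fderiv
    have h := hom.analyticAt_symm' hmemsrc (by rw [hcoe]; exact hΦa) hfd
    have hval : hom (r, x₀) = ((1 : ℝ), x₀) := by rw [hcoe, hΦval]
    rwa [hval] at h
  have hg : AnalyticAt ℝ (fun x : C₀(ℕ, ℝ) => (hom.symm ((1 : ℝ), x)).1) x₀ := by
    have hin : AnalyticAt ℝ (fun x : C₀(ℕ, ℝ) => ((1 : ℝ), x)) x₀ :=
      analyticAt_const.prod analyticAt_id
    exact analyticAt_fst.comp (hsymm.comp hin)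
  refine hg.congr ?_
  have hmemtgt : ((1 : ℝ), x₀) ∈ hom.target := by
    have h := hom.map_source hmemsrc
    rwa [hcoe, hΦval] at h
  have htgt : ∀ᶠ x in nhds x₀, ((1 : ℝ), x) ∈ hom.target := by
    have hcont : ContinuousAt (fun x : C₀(ℕ, ℝ) => ((1 : ℝ), x)) x₀ :=
      (continuous_const.prodMk continuous_id).continuousAt
    exact hcont (hom.open_target.mem_nhds hmemtgt)
  have hpos : ∀ᶠ x in nhds x₀, 0 < (hom.symm ((1 : ℝ), x)).1 := by
    have hconts : ContinuousAt (fun x : C₀(ℕ, ℝ) => (hom.symm ((1 : ℝ), x)).1) x₀ :=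
      hg.continuousAt
    have hval : (hom.symm ((1 : ℝ), x₀)).1 = r := by
      have h := hom.left_inv hmemsrc
      rw [hcoe, hΦval] at h
      rw [h]
    have := hconts (Ioi_mem_nhds (show (0:ℝ) < (hom.symm ((1 : ℝ), x₀)).1 by rw [hval]; exact hr0))
    exact this
  have hne : ∀ᶠ x in nhds x₀, x ≠ (0 : C₀(ℕ, ℝ)) := isOpen_ne.eventually_mem hx₀
  filter_upwards [htgt, hpos, hne] with x h1 h2 h3
  have hri := hom.right_inv h1
  rw [hcoe] at hri
  have hq2 : (hom.symm ((1 : ℝ), x)).2 = x := congrArg Prod.snd hri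
  have hq1 : Cfun (((hom.symm ((1 : ℝ), x)).1)⁻¹ • (hom.symm ((1 : ℝ), x)).2) = 1 :=
    congrArg Prod.fst hri
  rw [hq2] at hq1
  exact (PreissAux.preissNorm_eq h3 h2 hq1).symm
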